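/- arXiv:2301.02814 — 5 statements merged into one kernel-verified Lean document; each statement's English description precedes it below -/
import Mathlib

section
/- Let M be a metric space and X a finite subset of M. Let X_opt ⊆ X with |X \ X_opt| ≤ z, and suppose X_opt ⊆ ⋃_{j=1}^{k} C_j where each C_j ⊆ closedBall(c_j, r) for centers c_j ∈ M and r ≥ 0. Let Q ⊆ X and E ⊆ X satisfy d(p, q) > 2r for all p ∈ Q and q ∈ E. Then: (i) for every index j with E ∩ C_j ≠ ∅ one has Q ∩ C_j = ∅, so Q ∩ X_opt is contained in the union of those clusters C_j that E does not intersect; and (ii) |Q ∩ X_opt| ≥ |Q| − z. In particular, if |Q| ≥ (1+ε)·z for some ε > 0, then |Q ∩ X_opt| ≥ (ε/(1+ε))·|Q|. -/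
/-!
A point `p` far from `E` cannot share a cluster with any `q ∈ E`: both would lie in a
ball of radius `r`, forcing `dist p q ≤ 2r`. Every inlier of `Q` lies in some cluster,
which therefore misses `E`. Counting, `Q \ Xopt ⊆ X \ Xopt` has at most `z` points, so
`|Q ∩ Xopt| ≥ |Q| - z`, and `|Q| - z ≥ |Q| - |Q|/(1+ε) = (ε/(1+ε))|Q|` once `|Q| ≥ (1+ε)z`.
-/

open Finset

theorem Metric.notMem_of_subset_closedBall_of_two_mul_lt_dist {M : Type*}
    [PseudoMetricSpace M] {s : Set M} {c p q : M} {r : ℝ}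
    (hs : s ⊆ Metric.closedBall c r) (hq : q ∈ s) (hpq : 2 * r < dist p q) : p ∉ s := by
  intro hp
  have hpc : dist p c ≤ r := hs hp
  have hqc : dist q c ≤ r := hs hq
  have := dist_triangle_right p q c
  linarith

theorem Finset.card_le_card_inter_add_card_sdiff_of_subset {α : Type*} [DecidableEq α]
    {Q X Y : Finset α} (hQ : Q ⊆ X) : #Q ≤ #(Q ∩ Y) + #(X \ Y) := by
  rw [← card_inter_add_card_sdiff Q Y]
  exact Nat.add_le_add_left (card_le_card (sdiff_subset_sdiff hQ le_rfl)) _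

theorem div_one_add_mul_le_of_sub_le {a q z ε : ℝ} (hε : 0 < ε) (hqz : (1 + ε) * z ≤ q)
    (ha : q - z ≤ a) : ε / (1 + ε) * q ≤ a := by
  have hpos : 0 < 1 + ε := by linarith
  calc ε / (1 + ε) * q = q - q / (1 + ε) := by field_simp; ring
    _ ≤ q - z := by gcongr; rwa [le_div_iff₀ hpos, mul_comm]
    _ ≤ a := ha

theorem far_points_hit_new_cluster_general {M : Type*} [MetricSpace M] [DecidableEq M]
    (X Xopt Q E : Finset M) (k z : ℕ)
    (c : Fin k → M) (r : ℝ) (C : Fin k → Set M)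
    (houtliers : (X \ Xopt).card ≤ z)
    (hcover : ∀ p ∈ Xopt, p ∈ ⋃ j, C j)
    (hC : ∀ j, C j ⊆ Metric.closedBall (c j) r)
    (hQ : Q ⊆ X)
    (hfar : ∀ p ∈ Q, ∀ q ∈ E, 2 * r < dist p q) :
    (∀ j, (∃ q ∈ E, q ∈ C j) → ∀ p ∈ Q, p ∉ C j) ∧
    (∀ p ∈ Q ∩ Xopt, ∃ j, (¬ ∃ q ∈ E, q ∈ C j) ∧ p ∈ C j) ∧
    ((Q.card : ℝ) - z ≤ ((Q ∩ Xopt).card : ℝ)) ∧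
    (∀ ε : ℝ, 0 < ε → (1 + ε) * z ≤ Q.card →
      (ε / (1 + ε)) * Q.card ≤ ((Q ∩ Xopt).card : ℝ)) := by
  have avoid : ∀ j, (∃ q ∈ E, q ∈ C j) → ∀ p ∈ Q, p ∉ C j := fun j ⟨q, hqE, hqC⟩ p hpQ =>
    Metric.notMem_of_subset_closedBall_of_two_mul_lt_dist (hC j) hqC (hfar p hpQ q hqE)
  have inliers : (Q.card : ℝ) - z ≤ ((Q ∩ Xopt).card : ℝ) := by
    have := (card_le_card_inter_add_card_sdiff_of_subset (Y := Xopt) hQ).trans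
      (Nat.add_le_add_left houtliers _)
    rw [sub_le_iff_le_add]
    exact_mod_cast this
  refine ⟨avoid, fun p hp => ?_, inliers,
    fun ε hε hQz => div_one_add_mul_le_of_sub_le hε hQz inliers⟩
  obtain ⟨hpQ, hpXopt⟩ := mem_inter.mp hp
  obtain ⟨j, hpC⟩ := Set.mem_iUnion.mp (hcover p hpXopt)
  exact ⟨j, fun hE => avoid j hE p hpQ hpC, hpC⟩

/-- The deterministic core of Lemma 2 of the paper. `X` is the data set, `Xopt` the
inliers (so at most `z` outliers), with `Xopt` covered by the optimal clusters
`C j ⊆ closedBall (c j) r`. If every point of `Q` is at distance more than `2r` from `E`,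
then (i) `Q` avoids every cluster met by `E` (hence `Q ∩ Xopt` lies in the union of the
clusters missed by `E`), (ii) `|Q ∩ Xopt| ≥ |Q| − z`, and in particular if
`|Q| ≥ (1+ε)z` then `|Q ∩ Xopt| ≥ (ε/(1+ε))·|Q|`. -/
theorem far_points_hit_new_cluster {M : Type*} [MetricSpace M] [DecidableEq M]
    (X Xopt Q E : Finset M) (k z : ℕ) (hk : 1 ≤ k)
    (c : Fin k → M) (r : ℝ) (hr : 0 ≤ r) (C : Fin k → Set M)
    (hXopt : Xopt ⊆ X) (houtliers : (X \ Xopt).card ≤ z)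
    (hcover : ∀ p ∈ Xopt, p ∈ ⋃ j, C j)
    (hC : ∀ j, C j ⊆ Metric.closedBall (c j) r)
    (hQ : Q ⊆ X) (hE : E ⊆ X)
    (hfar : ∀ p ∈ Q, ∀ q ∈ E, 2 * r < dist p q) :
    (∀ j, (∃ q ∈ E, q ∈ C j) → ∀ p ∈ Q, p ∉ C j) ∧
    (∀ p ∈ Q ∩ Xopt, ∃ j, (¬ ∃ q ∈ E, q ∈ C j) ∧ p ∈ C j) ∧
    ((Q.card : ℝ) - z ≤ ((Q ∩ Xopt).card : ℝ)) ∧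
    (∀ ε : ℝ, 0 < ε → (1 + ε) * z ≤ Q.card →
      (ε / (1 + ε)) * Q.card ≤ ((Q ∩ Xopt).card : ℝ)) :=
  far_points_hit_new_cluster_general X Xopt Q E k z c r C houtliers hcover hC hQ hfar
end

section
/- Let P be a finite set of n points in ℝ^D, let k ≥ 1, z ≥ 1 with γ := z/n ∈ (0,1), let ε ∈ (0, 1/2], α > 0, and let S ⊆ P be nonempty. For centers c : Fin k → ℝ^D and radius r ≥ 0, write Cov(c,r) = {p ∈ ℝ^D : min_j ‖p − c_j‖ ≤ r}. Assume the relative-approximation property: for every c : Fin k → ℝ^D and r ≥ 0, letting π = ℝ^D \ Cov(c,r), one has | |π ∩ P|/n − |π ∩ S|/|S| | ≤ ε·max{ |π ∩ P|/n, γ }. Let r_opt = inf{ r ≥ 0 : ∃ c, |Cov(c,r) ∩ P| ≥ n − z } and assume it is attained by some centers c*. Set z' = (1+ε)·γ·|S| and ρ_S = inf{ r ≥ 0 : ∃ c, |Cov(c,r) ∩ S| ≥ |S| − z' }. Suppose centers c^S : Fin k → ℝ^D and radius r_S satisfy |Cov(c^S, r_S) ∩ S| ≥ |S| − (1+ε)·z'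 and r_S ≤ α·ρ_S. Then r_S ≤ α·r_opt and |Cov(c^S, r_S) ∩ P| ≥ n − ((1+ε)²/(1−ε))·γ·n. -/
/-!
A witness of the optimal radius leaves at most a `γ`-fraction of `P` uncovered, so by the
relative approximation it leaves at most a `(1 + ε)γ`-fraction of `S` uncovered; hence it is
feasible for the clustering of `S` with `z'` outliers, and `ρ_S ≤ r_opt`. Conversely, the
approximate solution on `S` leaves at most a `(1 + ε)²γ`-fraction of `S` uncovered; if it left
more than a `γ`-fraction of `P` uncovered, the relative error would be measured against that
fraction itself, which therefore exceeds the sample fraction by at most the factor `1/(1 - ε)`.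
-/

open scoped Classical

/-- `Cov c r` is the union of the `k` closed balls of radius `r` around the centers
`c 0, …, c (k-1)`: the set of points whose minimum distance to the centers is at most
`r`. -/
def Cov {D k : ℕ} (c : Fin k → EuclideanSpace ℝ (Fin D)) (r : ℝ) :
    Set (EuclideanSpace ℝ (Fin D)) :=
  {p | ∃ j, ‖p - c j‖ ≤ r}

open Finset

lemma le_one_add_mul_of_abs_sub_le_mul_max {x y γ ε : ℝ} (h : |x - y| ≤ ε * max x γ)
    (hx : x ≤ γ) : y ≤ (1 + ε) * γ := by
  rw [max_eq_right hx] at h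
  linarith [(abs_le.mp h).1]

lemma le_div_one_sub_of_abs_sub_le_mul_max {x y γ ε β : ℝ} (h : |x - y| ≤ ε * max x γ)
    (hε : ε < 1) (hy : y ≤ β) (hγβ : (1 - ε) * γ ≤ β) : x ≤ β / (1 - ε) := by
  rw [le_div_iff₀ (by linarith)]
  rcases le_total x γ with hxγ | hγx
  · nlinarith
  · rw [max_eq_left hγx] at h
    linarith [(abs_le.mp h).2]

def IsRelApprox {α : Type*} (P S : Finset α) (ε γ : ℝ) (q : α → Prop) [DecidablePred q] :
    Prop :=
  |(#(P.filter q) : ℝ) / #P - #(S.filter q) / #S| ≤ ε * max ((#(P.filter q) : ℝ) / #P) γ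

namespace IsRelApprox

variable {α : Type*} {P S : Finset α} {ε γ : ℝ} {q : α → Prop} [DecidablePred q]

lemma card_sample_le (h : IsRelApprox P S ε γ q) (hP : P.Nonempty) (hS : S.Nonempty)
    (hq : #(P.filter q) ≤ γ * #P) : #(S.filter q) ≤ (1 + ε) * γ * #S := by
  have hPpos : (0 : ℝ) < #P := by exact_mod_cast hP.card_pos
  have hSpos : (0 : ℝ) < #S := by exact_mod_cast hS.card_pos
  rw [← div_le_iff₀ hSpos]
  exact le_one_add_mul_of_abs_sub_le_mul_max h ((div_le_iff₀ hPpos).mpr hq)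

lemma card_le_of_card_sample_le {β : ℝ} (h : IsRelApprox P S ε γ q) (hS : S.Nonempty)
    (hε : ε < 1) (hq : #(S.filter q) ≤ β * #S) (hγβ : (1 - ε) * γ ≤ β) :
    #(P.filter q) ≤ β / (1 - ε) * #P := by
  have hSpos : (0 : ℝ) < #S := by exact_mod_cast hS.card_pos
  rcases P.eq_empty_or_nonempty with rfl | hP
  · simp
  rw [← div_le_iff₀ (by exact_mod_cast hP.card_pos)]
  exact le_div_one_sub_of_abs_sub_le_mul_max h hε ((div_le_iff₀ hSpos).mpr hq) hγβ

end IsRelApprox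

lemma cast_card_filter_eq_sub {α : Type*} (s : Finset α) (p : α → Prop) [DecidablePred p]
    [∀ a, Decidable (¬p a)] :
    (#(s.filter p) : ℝ) = #s - #(s.filter fun a ↦ ¬p a) := by
  rw [eq_sub_iff_add_eq]
  exact_mod_cast card_filter_add_card_filter_not p

lemma card_filter_not_le_of_card_sub_le {α : Type*} {s : Finset α} {p : α → Prop}
    [DecidablePred p] [∀ a, Decidable (¬p a)] {m : ℕ} (h : #s - m ≤ #(s.filter p)) :
    #(s.filter fun a ↦ ¬p a) ≤ m := by
  have := card_filter_add_card_filter_not (s := s) p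
  omega

theorem uniform_sample_coreset_general (D n k z : ℕ)
    (P : Finset (EuclideanSpace ℝ (Fin D))) (hn : P.card = n)
    (γ : ℝ) (hγ : γ = (z : ℝ) / n) (hγ0 : 0 < γ)
    (ε α : ℝ) (hε0 : 0 < ε) (hε1 : ε ≤ 1 / 2) (hα : 0 < α)
    (S : Finset (EuclideanSpace ℝ (Fin D))) (hSne : S.Nonempty)
    (hrel : ∀ (c : Fin k → EuclideanSpace ℝ (Fin D)) (r : ℝ), 0 ≤ r →
      |((P.filter fun p => p ∉ Cov c r).card : ℝ) / n -
          ((S.filter fun p => p ∉ Cov c r).card : ℝ) / S.card| ≤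
        ε * max (((P.filter fun p => p ∉ Cov c r).card : ℝ) / n) γ)
    (ropt : ℝ)
    (hropt : ropt = sInf {r : ℝ | 0 ≤ r ∧ ∃ c : Fin k → EuclideanSpace ℝ (Fin D),
        n - z ≤ (P.filter fun p => p ∈ Cov c r).card})
    (hattained : ∃ cstar : Fin k → EuclideanSpace ℝ (Fin D),
        n - z ≤ (P.filter fun p => p ∈ Cov cstar ropt).card)
    (z' ρS : ℝ) (hz' : z' = (1 + ε) * γ * S.card)
    (hρS : ρS = sInf {r : ℝ | 0 ≤ r ∧ ∃ c : Fin k → EuclideanSpace ℝ (Fin D),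
        (S.card : ℝ) - z' ≤ ((S.filter fun p => p ∈ Cov c r).card : ℝ)})
    (cS : Fin k → EuclideanSpace ℝ (Fin D)) (rS : ℝ) (hrS0 : 0 ≤ rS)
    (hcov : (S.card : ℝ) - (1 + ε) * z' ≤ ((S.filter fun p => p ∈ Cov cS rS).card : ℝ))
    (happrox : rS ≤ α * ρS) :
    rS ≤ α * ropt ∧
      (n : ℝ) - ((1 + ε) ^ 2 / (1 - ε)) * γ * n ≤
        ((P.filter fun p => p ∈ Cov cS rS).card : ℝ) := by
  subst hn
  obtain ⟨cstar, hcstar⟩ := hattained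
  have hP : P.Nonempty := card_pos.mp <| Nat.pos_of_ne_zero fun h ↦ by
    rw [h, Nat.cast_zero, div_zero] at hγ
    exact hγ0.ne' hγ
  have hropt0 : 0 ≤ ropt := hropt ▸ Real.sInf_nonneg fun r hr ↦ hr.1
  have hz_eq : (z : ℝ) = γ * #P := by
    rw [hγ, div_mul_cancel₀]; exact_mod_cast hP.card_pos.ne'
  have hstar_out : (#(P.filter fun p ↦ p ∉ Cov cstar ropt) : ℝ) ≤ γ * #P := by
    rw [← hz_eq]
    exact_mod_cast card_filter_not_le_of_card_sub_le hcstar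
  have hρS_le : ρS ≤ ropt := by
    have hS_out := IsRelApprox.card_sample_le (hrel cstar ropt hropt0) hP hSne hstar_out
    rw [hρS]
    refine csInf_le ⟨0, fun r hr ↦ hr.1⟩ ⟨hropt0, cstar, ?_⟩
    rw [cast_card_filter_eq_sub]
    linarith
  refine ⟨happrox.trans (by gcongr), ?_⟩
  have hS_out : (#(S.filter fun p ↦ p ∉ Cov cS rS) : ℝ) ≤ (1 + ε) ^ 2 * γ * #S := by
    rw [cast_card_filter_eq_sub, hz'] at hcov
    linarith
  have hP_out := IsRelApprox.card_le_of_card_sample_le (hrel cS rS hrS0) hSne (by linarith)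
    hS_out (mul_le_mul_of_nonneg_right (by nlinarith) hγ0.le)
  rw [mul_div_right_comm] at hP_out
  rw [cast_card_filter_eq_sub]
  linarith

/-- The deterministic content of Theorem 5 of the paper: if the sample `S ⊆ P` is a
relative `(ε,γ)`-approximation of `P` with respect to complements of unions of `k`
balls, then any `α`-approximate solution of `(k, z')_ε`-center clustering on `S`
(with `z' = (1+ε)γ|S|`) has radius at most `α·r_opt` and covers all but
`((1+ε)²/(1−ε))·γ·n` points of `P`. -/
theorem uniform_sample_coreset (D n k z : ℕ) (hk : 1 ≤ k) (hz : 1 ≤ z)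
    (P : Finset (EuclideanSpace ℝ (Fin D))) (hn : P.card = n)
    (γ : ℝ) (hγ : γ = (z : ℝ) / n) (hγ0 : 0 < γ) (hγ1 : γ < 1)
    (ε α : ℝ) (hε0 : 0 < ε) (hε1 : ε ≤ 1 / 2) (hα : 0 < α)
    (S : Finset (EuclideanSpace ℝ (Fin D))) (hSP : S ⊆ P) (hSne : S.Nonempty)
    (hrel : ∀ (c : Fin k → EuclideanSpace ℝ (Fin D)) (r : ℝ), 0 ≤ r →
      |((P.filter fun p => p ∉ Cov c r).card : ℝ) / n -
          ((S.filter fun p => p ∉ Cov c r).card : ℝ) / S.card| ≤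
        ε * max (((P.filter fun p => p ∉ Cov c r).card : ℝ) / n) γ)
    (ropt : ℝ)
    (hropt : ropt = sInf {r : ℝ | 0 ≤ r ∧ ∃ c : Fin k → EuclideanSpace ℝ (Fin D),
        n - z ≤ (P.filter fun p => p ∈ Cov c r).card})
    (hattained : ∃ cstar : Fin k → EuclideanSpace ℝ (Fin D),
        n - z ≤ (P.filter fun p => p ∈ Cov cstar ropt).card)
    (z' ρS : ℝ) (hz' : z' = (1 + ε) * γ * S.card)
    (hρS : ρS = sInf {r : ℝ | 0 ≤ r ∧ ∃ c : Fin k → EuclideanSpace ℝ (Fin D),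
        (S.card : ℝ) - z' ≤ ((S.filter fun p => p ∈ Cov c r).card : ℝ)})
    (cS : Fin k → EuclideanSpace ℝ (Fin D)) (rS : ℝ) (hrS0 : 0 ≤ rS)
    (hcov : (S.card : ℝ) - (1 + ε) * z' ≤ ((S.filter fun p => p ∈ Cov cS rS).card : ℝ))
    (happrox : rS ≤ α * ρS) :
    rS ≤ α * ropt ∧
      (n : ℝ) - ((1 + ε) ^ 2 / (1 - ε)) * γ * n ≤
        ((P.filter fun p => p ∈ Cov cS rS).card : ℝ) :=
  uniform_sample_coreset_general D n k z P hn γ hγ hγ0 ε α hε0 hε1 hα S hSne hrel ropt hropt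
    hattained z' ρS hz' hρS cS rS hrS0 hcov happrox
end

section
/- Let M be a metric space, n, z ∈ ℕ with z < n, δ ≥ 0, and let x, y : Fin n → M be two families of points with d(x_i, y_i) ≤ δ for every i ∈ Fin n. Then for every nonempty finite set H ⊆ M of centers, |cost_z(x, H) − cost_z(y, H)| ≤ δ. -/
/-!
Moving every point by at most `δ` moves every covering radius by at most `δ`: if the
points of `y` indexed by `I` lie within `r` of `H`, the triangle inequality puts the
corresponding points of `x` within `r + δ` of `H`. Taking infima gives
`cost_z(x, H) ≤ cost_z(y, H) + δ`, and the bound is symmetric in `x` and `y`.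
-/

/-- The `k`-center clustering cost with `z` outliers of the point family `x : Fin n → M`
with respect to the center set `H`: the minimum over subsets `I ⊆ Fin n` with
`|I| ≥ n - z` of `max_{i ∈ I} min_{c ∈ H} dist (x i) c`, expressed as the infimum
of all feasible radii. -/
noncomputable def kCenterCost {M : Type*} [MetricSpace M] (n z : ℕ)
    (x : Fin n → M) (H : Finset M) : ℝ :=
  sInf {r : ℝ | ∃ I : Finset (Fin n), n - z ≤ I.card ∧ ∀ i ∈ I, ∃ c ∈ H, dist (x i) c ≤ r}

theorem Real.sInf_le_sInf_add {S T : Set ℝ} {δ : ℝ} (hS : S.Nonempty) (hT : BddBelow T)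
    (h : ∀ r ∈ S, r + δ ∈ T) : sInf T ≤ sInf S + δ :=
  sub_le_iff_le_add.1 <| le_csInf hS fun r hr => sub_le_iff_le_add.2 (csInf_le hT (h r hr))

namespace KCenter

variable {M : Type*} [MetricSpace M] {n z : ℕ}

def IsFeasibleRadius (n z : ℕ) (x : Fin n → M) (H : Finset M) (r : ℝ) : Prop :=
  ∃ I : Finset (Fin n), n - z ≤ I.card ∧ ∀ i ∈ I, ∃ c ∈ H, dist (x i) c ≤ r

theorem exists_isFeasibleRadius (x : Fin n → M) {H : Finset M} (hH : H.Nonempty) :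
    ∃ r, IsFeasibleRadius n z x H r := by
  obtain ⟨c, hc⟩ := hH
  refine ⟨∑ j, dist (x j) c, Finset.univ, by simp, fun i _ => ⟨c, hc, ?_⟩⟩
  exact Finset.single_le_sum (fun j _ => dist_nonneg) (Finset.mem_univ i)

theorem IsFeasibleRadius.nonneg (hz : z < n) {x : Fin n → M} {H : Finset M} {r : ℝ}
    (hr : IsFeasibleRadius n z x H r) : 0 ≤ r := by
  obtain ⟨I, hcard, hI⟩ := hr
  obtain ⟨i, hi⟩ : I.Nonempty := Finset.card_pos.1 (by omega)
  obtain ⟨c, -, hc⟩ := hI i hi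
  exact dist_nonneg.trans hc

theorem IsFeasibleRadius.of_dist_le {x y : Fin n → M} {H : Finset M} {r δ : ℝ}
    (hxy : ∀ i, dist (x i) (y i) ≤ δ) (hr : IsFeasibleRadius n z y H r) :
    IsFeasibleRadius n z x H (r + δ) := by
  obtain ⟨I, hcard, hI⟩ := hr
  refine ⟨I, hcard, fun i hi => ?_⟩
  obtain ⟨c, hc, hyc⟩ := hI i hi
  refine ⟨c, hc, ?_⟩
  calc dist (x i) c ≤ dist (x i) (y i) + dist (y i) c := dist_triangle _ _ _
    _ ≤ r + δ := by linarith [hxy i]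

theorem kCenterCost_le_add_of_dist_le (hz : z < n) {x y : Fin n → M} {δ : ℝ}
    (hxy : ∀ i, dist (x i) (y i) ≤ δ) {H : Finset M} (hH : H.Nonempty) :
    kCenterCost n z x H ≤ kCenterCost n z y H + δ :=
  Real.sInf_le_sInf_add (exists_isFeasibleRadius y hH) ⟨0, fun _ hr => IsFeasibleRadius.nonneg hz hr⟩
    fun _ hr => IsFeasibleRadius.of_dist_le hxy hr

end KCenter

open KCenter in
theorem kCenterCost_perturbation_general {M : Type*} [MetricSpace M]
    (n z : ℕ) (hz : z < n) (δ : ℝ)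
    (x y : Fin n → M) (hxy : ∀ i : Fin n, dist (x i) (y i) ≤ δ) :
    ∀ H : Finset M, H.Nonempty →
      |kCenterCost n z x H - kCenterCost n z y H| ≤ δ := by
  intro H hH
  have hyx : ∀ i, dist (y i) (x i) ≤ δ := fun i => dist_comm (y i) (x i) ▸ hxy i
  rw [abs_sub_le_iff, sub_le_iff_le_add', sub_le_iff_le_add']
  exact ⟨kCenterCost_le_add_of_dist_le hz hxy hH, kCenterCost_le_add_of_dist_le hz hyx hH⟩

/-- The perturbation stability at the core of Theorem 7 of the paper: if the two point
families `x` and `y` satisfy `dist (x i) (y i) ≤ δ` for all `i`, then for every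
nonempty finite center set `H` the `k`-center-with-`z`-outliers costs differ by at
most `δ`. -/
theorem kCenterCost_perturbation {M : Type*} [MetricSpace M]
    (n z : ℕ) (hz : z < n) (δ : ℝ) (hδ : 0 ≤ δ)
    (x y : Fin n → M) (hxy : ∀ i : Fin n, dist (x i) (y i) ≤ δ) :
    ∀ H : Finset M, H.Nonempty →
      |kCenterCost n z x H - kCenterCost n z y H| ≤ δ :=
  kCenterCost_perturbation_general n z hz δ x y hxy
end

section
/- Let M be a metric space, X a finite subset of M, O ⊆ X, k ≥ 1, c : Fin k → M a family of centers, and r ≥ 0 such that X \ O ⊆ ⋃_{j} closedBall(c_j, r). Then for every subset Y ⊆ X there exists a set H ⊆ Y \ O with |H| ≤ k such that every point p ∈ Y \ O satisfies min_{q ∈ H} d(p, q) ≤ 2r. -/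
open Finset

/-- Pick one point of `S` in each ball that meets `S`; the triangle inequality through the ball's
center turns radius `r` into `2 * r`. -/
theorem Finset.exists_subset_card_le_forall_dist_le_two_mul {M ι : Type*} [PseudoMetricSpace M]
    [DecidableEq M] [Fintype ι] (S : Finset M) (c : ι → M) (r : ℝ)
    (hS : ∀ p ∈ S, ∃ j, dist p (c j) ≤ r) :
    ∃ H ⊆ S, H.card ≤ Fintype.card ι ∧ ∀ p ∈ S, ∃ q ∈ H, dist p q ≤ 2 * r := by
  classical
  have hmeets : ∀ j : {j // ∃ q ∈ S, dist q (c j) ≤ r}, ∃ q ∈ S, dist q (c j) ≤ r := Subtype.prop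
  choose g hgS hgc using hmeets
  refine ⟨univ.image g, image_subset_iff.2 fun j _ => hgS j, ?_, ?_⟩
  · exact card_image_le.trans (Fintype.card_subtype_le _)
  · intro p hp
    obtain ⟨j, hj⟩ := hS p hp
    let j' : {j // ∃ q ∈ S, dist q (c j) ≤ r} := ⟨j, p, hp, hj⟩
    refine ⟨g j', mem_image_of_mem g (mem_univ j'), ?_⟩
    calc dist p (g j') ≤ dist p (c j) + dist (g j') (c j) := dist_triangle_right _ _ _
      _ ≤ 2 * r := by linarith [hgc j']

theorem surrogate_centers_two_approx_general {M : Type*} [MetricSpace M] [DecidableEq M]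
    (X O : Finset M) (k : ℕ)
    (c : Fin k → M) (r : ℝ)
    (hcover : ∀ p ∈ X \ O, ∃ j : Fin k, dist p (c j) ≤ r) :
    ∀ Y : Finset M, Y ⊆ X →
      ∃ H : Finset M, H ⊆ Y \ O ∧ H.card ≤ k ∧
        ∀ p ∈ Y \ O, ∃ q ∈ H, dist p q ≤ 2 * r := by
  intro Y hY
  obtain ⟨H, hHS, hcard, hH⟩ := (Y \ O).exists_subset_card_le_forall_dist_le_two_mul c r
    fun p hp => hcover p (sdiff_subset_sdiff hY subset_rfl hp)
  exact ⟨H, hHS, by simpa using hcard, hH⟩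

/-- Lemma 3 ('cl-distributed') of the paper: if the inliers `X \ O` are covered by `k`
balls of radius `r`, then for every subset `Y ⊆ X` there are at most `k` surrogate
centers `H ⊆ Y \ O` such that every point of `Y \ O` is within distance `2r` of `H`. -/
theorem surrogate_centers_two_approx {M : Type*} [MetricSpace M] [DecidableEq M]
    (X O : Finset M) (hO : O ⊆ X) (k : ℕ) (hk : 1 ≤ k)
    (c : Fin k → M) (r : ℝ) (hr : 0 ≤ r)
    (hcover : ∀ p ∈ X \ O, ∃ j : Fin k, dist p (c j) ≤ r) :
    ∀ Y : Finset M, Y ⊆ X →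
      ∃ H : Finset M, H ⊆ Y \ O ∧ H.card ≤ k ∧
        ∀ p ∈ Y \ O, ∃ q ∈ H, dist p q ≤ 2 * r :=
  surrogate_centers_two_approx_general X O k c r hcover
end

section
/- Let s ≥ 1 and z ≥ 1 be integers, and for each i ∈ Fin s let h_i : {0,1,…,z} → ℝ be non-increasing. Order pairs in ℝ × Fin s lexicographically: (a, i) ≺ (b, j) iff a < b, or a = b and i < j. Let (q₀, i₀) ∈ {0,…,z} × Fin s be such that exactly 2z index pairs (i, q) ∈ Fin s × {0,…,z} satisfy [ (h_{i₀}(q₀), i₀) ≺ (h_i(q), i) ] or [ i = i₀ and h_{i₀}(q) = h_{i₀}(q₀) and q < q₀ ] (i.e., (h_{i₀}(q₀), i₀) is the (2z+1)-th largest item in the lexicographically decreasing sorted sequence of the s(z+1) pairs, with ties at site i₀ broken by increasing q). For i ≠ i₀ define z_i = min{ q ∈ {0,…,z} : (h_i(q), i) ≺ (h_{i₀}(q₀), i₀) } if this set is nonempty and z_i = z otherwise; define z_{i₀} = min{ q ∈ {0,…,z} : h_{i₀}(q) = h_{i₀}(q₀) }. Then Σ_{i=1}^{s} z_i ≤ 2z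 and (z_1, …, z_s) minimizes max_{1≤i≤s} h_i(q_i) over all (q_1, …, q_s) ∈ {0,…,z}^s with Σ_{i=1}^{s} q_i ≤ 2z. -/
/-!
Call a pair `(i, q)` *above the pivot* if it precedes `(h i₀ q₀, i₀)` in the server's order
(`RanksAbove`). By assumption exactly `2z` pairs are above the pivot, and since every `h i` is
non-increasing, those in row `i` form an initial segment of length `rᵢ`, with `r_{i₀} = q₀`.
Each budget `zᵢ` only skips pairs above the pivot, so `zᵢ ≤ rᵢ` and `∑ zᵢ ≤ 2z`; moreover
`h i zᵢ ≤ h i₀ q₀` unless `zᵢ = z`. Conversely, a budget vector `q` with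
`maxᵢ h i qᵢ < h i₀ q₀` must skip every pair above the pivot and the pivot itself, so
`∑ qᵢ ≥ 2z + 1`. Hence `maxᵢ h i qᵢ ≥ h i₀ q₀ ≥ maxᵢ h i zᵢ` for every feasible `q`.
-/

open Finset
open scoped Classical

/-- The lexicographic order on pairs `(value, site index)` used by the central server in
Algorithm 6 of the paper. -/
def lexLt {s : ℕ} (p q : ℝ × Fin s) : Prop :=
  p.1 < q.1 ∨ (p.1 = q.1 ∧ p.2 < q.2)

theorem Finset.le_card_filter_range {P : ℕ → Prop} [DecidablePred P] {m n : ℕ} (hmn : m ≤ n)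
    (hP : ∀ q < m, P q) : m ≤ #((range n).filter P) := by
  have hsub : range m ⊆ (range n).filter P := fun q hq => by
    rw [mem_range] at hq
    exact mem_filter.2 ⟨mem_range.2 (hq.trans_le hmn), hP q hq⟩
  simpa using card_le_card hsub

theorem Finset.card_filter_range_le {P : ℕ → Prop} [DecidablePred P] {m n : ℕ}
    (hP : ∀ q < n, P q → q < m) : #((range n).filter P) ≤ m := by
  have hsub : (range n).filter P ⊆ range m := fun q hq => by
    rw [mem_filter, mem_range] at hq
    exact mem_range.2 (hP q hq.1 hq.2)
  simpa using card_le_card hsub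

theorem lexLt_of_not_lexLt {s : ℕ} {a b : ℝ} {i j : Fin s} (hij : i ≠ j)
    (h : ¬ lexLt (a, i) (b, j)) : lexLt (b, j) (a, i) := by
  simp only [lexLt, not_or, not_and, not_lt] at h ⊢
  rcases h.1.lt_or_eq with hab | hab
  · exact Or.inl hab
  · exact Or.inr ⟨hab, lt_of_le_of_ne (h.2 hab.symm) hij.symm⟩

section Pivot

variable {s z : ℕ} {h : Fin s → ℕ → ℝ} {i₀ : Fin s} {q₀ : ℕ}

def RanksAbove (h : Fin s → ℕ → ℝ) (i₀ : Fin s) (q₀ : ℕ) (i : Fin s) (q : ℕ) : Prop :=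
  lexLt (h i₀ q₀, i₀) (h i q, i) ∨ (i = i₀ ∧ h i q = h i₀ q₀ ∧ q < q₀)

noncomputable def aboveRow (z : ℕ) (h : Fin s → ℕ → ℝ) (i₀ : Fin s) (q₀ : ℕ) (i : Fin s) :
    Finset ℕ :=
  (range (z + 1)).filter (RanksAbove h i₀ q₀ i)

theorem sum_card_aboveRow (z : ℕ) (h : Fin s → ℕ → ℝ) (i₀ : Fin s) (q₀ : ℕ) :
    ∑ i, #(aboveRow z h i₀ q₀ i) =
      #((univ ×ˢ range (z + 1)).filter fun p : Fin s × ℕ => RanksAbove h i₀ q₀ p.1 p.2) := by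
  rw [card_filter, sum_product]
  exact sum_congr rfl fun i _ => card_filter _ _

theorem le_of_ranksAbove {i : Fin s} {q : ℕ} (hq : RanksAbove h i₀ q₀ i q) :
    h i₀ q₀ ≤ h i q := by
  rcases hq with (hlt | ⟨heq, -⟩) | ⟨-, heq, -⟩
  exacts [hlt.le, heq.le, heq.ge]

theorem ranksAbove_of_not_lexLt {i : Fin s} {q : ℕ} (hi : i ≠ i₀)
    (hq : ¬ lexLt (h i q, i) (h i₀ q₀, i₀)) : RanksAbove h i₀ q₀ i q :=
  Or.inl (lexLt_of_not_lexLt hi hq)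

theorem ranksAbove_self_iff (hmono : AntitoneOn (h i₀) (Set.Iic z)) (hq₀ : q₀ ≤ z) {q : ℕ}
    (hq : q ≤ z) : RanksAbove h i₀ q₀ i₀ q ↔ q < q₀ := by
  constructor
  · intro habove
    by_contra! hle
    have hval : h i₀ q ≤ h i₀ q₀ := hmono hq₀ hq hle
    rcases habove with (hlt | ⟨-, hii⟩) | ⟨-, -, hlt⟩
    exacts [hval.not_gt hlt, hii.false, hle.not_gt hlt]
  · intro hlt
    rcases (hmono hq hq₀ hlt.le).lt_or_eq with hval | hval
    exacts [Or.inl (Or.inl hval), Or.inr ⟨rfl, hval.symm, hlt⟩]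

theorem card_aboveRow_le {i : Fin s} {p : ℕ} (hmono : AntitoneOn (h i) (Set.Iic z))
    (hp : p ≤ z) (hlt : h i p < h i₀ q₀) : #(aboveRow z h i₀ q₀ i) ≤ p := by
  refine card_filter_range_le fun q hq habove => ?_
  by_contra! hpq
  exact (hmono hp (Nat.le_of_lt_succ hq) hpq).not_gt (hlt.trans_le (le_of_ranksAbove habove))

theorem card_aboveRow_self_le (hmono : AntitoneOn (h i₀) (Set.Iic z)) (hq₀ : q₀ ≤ z) :
    #(aboveRow z h i₀ q₀ i₀) ≤ q₀ :=
  card_filter_range_le fun _ hq habove =>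
    (ranksAbove_self_iff hmono hq₀ (Nat.le_of_lt_succ hq)).1 habove

/-- Budgets `qᵢ` whose values all lie strictly below the pivot's skip every pair above the
pivot and the pivot itself. -/
theorem sum_card_aboveRow_lt (hmono : ∀ i, AntitoneOn (h i) (Set.Iic z)) (hq₀ : q₀ ≤ z)
    {qf : Fin s → ℕ} (hqf : ∀ i, qf i ≤ z) (hlt : ∀ i, h i (qf i) < h i₀ q₀) :
    ∑ i, #(aboveRow z h i₀ q₀ i) < ∑ i, qf i := by
  have hq₀_lt : q₀ < qf i₀ := by
    by_contra! hle
    exact (hmono i₀ (hqf i₀) hq₀ hle).not_gt (hlt i₀)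
  exact sum_lt_sum (fun i _ => card_aboveRow_le (hmono i) (hqf i) (hlt i))
    ⟨i₀, mem_univ _, (card_aboveRow_self_le (hmono i₀) hq₀).trans_lt hq₀_lt⟩

structure IsPivotBudget (z : ℕ) (h : Fin s → ℕ → ℝ) (i₀ : Fin s) (q₀ : ℕ) (i : Fin s) (b : ℕ) :
    Prop where
  le : b ≤ z
  ranksAbove_of_lt : ∀ q < b, RanksAbove h i₀ q₀ i q
  eq_or_apply_le : b = z ∨ h i b ≤ h i₀ q₀

theorem IsPivotBudget.le_card_aboveRow {i : Fin s} {b : ℕ}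
    (hb : IsPivotBudget z h i₀ q₀ i b) : b ≤ #(aboveRow z h i₀ q₀ i) :=
  le_card_filter_range (hb.le.trans (Nat.le_succ z)) hb.ranksAbove_of_lt

theorem isPivotBudget_self (hmono : AntitoneOn (h i₀) (Set.Iic z)) (hq₀ : q₀ ≤ z) {b : ℕ}
    (hb : b = sInf {q : ℕ | q ≤ z ∧ h i₀ q = h i₀ q₀}) : IsPivotBudget z h i₀ q₀ i₀ b := by
  subst hb
  have hmem := Nat.sInf_mem (s := {q : ℕ | q ≤ z ∧ h i₀ q = h i₀ q₀}) ⟨q₀, hq₀, rfl⟩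
  have hbq₀ := Nat.sInf_le (s := {q : ℕ | q ≤ z ∧ h i₀ q = h i₀ q₀}) ⟨hq₀, rfl⟩
  exact ⟨hmem.1, fun q hq => (ranksAbove_self_iff hmono hq₀ (hq.le.trans hmem.1)).2
    (hq.trans_le hbq₀), Or.inr hmem.2.le⟩

theorem isPivotBudget_of_ne {i : Fin s} (hi : i ≠ i₀) {b : ℕ}
    (hb₁ : (∃ q ≤ z, lexLt (h i q, i) (h i₀ q₀, i₀)) →
      b = sInf {q : ℕ | q ≤ z ∧ lexLt (h i q, i) (h i₀ q₀, i₀)})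
    (hb₂ : (¬ ∃ q ≤ z, lexLt (h i q, i) (h i₀ q₀, i₀)) → b = z) :
    IsPivotBudget z h i₀ q₀ i b := by
  by_cases hex : ∃ q ≤ z, lexLt (h i q, i) (h i₀ q₀, i₀)
  · obtain ⟨q, hq, hlex⟩ := hex
    rw [hb₁ ⟨q, hq, hlex⟩]
    have hmem := Nat.sInf_mem (s := {q : ℕ | q ≤ z ∧ lexLt (h i q, i) (h i₀ q₀, i₀)})
      ⟨q, hq, hlex⟩
    refine ⟨hmem.1, fun q' hq' => ranksAbove_of_not_lexLt hi fun hlex' => ?_, ?_⟩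
    · exact Nat.notMem_of_lt_sInf hq' ⟨hq'.le.trans hmem.1, hlex'⟩
    · rcases hmem.2 with hlt | ⟨heq, -⟩
      exacts [Or.inr hlt.le, Or.inr heq.le]
  · have hb := hb₂ hex
    refine ⟨hb.le, fun q hq => ranksAbove_of_not_lexLt hi fun hlex => ?_, Or.inl hb⟩
    exact hex ⟨q, (hq.trans_eq hb).le, hlex⟩

end Pivot

theorem distributed_budget_minimax_general (s z : ℕ)
    (hsne : (Finset.univ : Finset (Fin s)).Nonempty)
    (h : Fin s → ℕ → ℝ)
    (hmono : ∀ i : Fin s, ∀ q q' : ℕ, q ≤ q' → q' ≤ z → h i q' ≤ h i q)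
    (i₀ : Fin s) (q₀ : ℕ) (hq₀ : q₀ ≤ z)
    (hrank : (((Finset.univ : Finset (Fin s)) ×ˢ Finset.range (z + 1)).filter
        fun p : Fin s × ℕ =>
          lexLt (h i₀ q₀, i₀) (h p.1 p.2, p.1) ∨
            (p.1 = i₀ ∧ h p.1 p.2 = h i₀ q₀ ∧ p.2 < q₀)).card = 2 * z)
    (zf : Fin s → ℕ)
    (hzf₁ : ∀ i : Fin s, i ≠ i₀ →
      (∃ q ≤ z, lexLt (h i q, i) (h i₀ q₀, i₀)) →
        zf i = sInf {q : ℕ | q ≤ z ∧ lexLt (h i q, i) (h i₀ q₀, i₀)})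
    (hzf₂ : ∀ i : Fin s, i ≠ i₀ →
      (¬ ∃ q ≤ z, lexLt (h i q, i) (h i₀ q₀, i₀)) → zf i = z)
    (hzf₀ : zf i₀ = sInf {q : ℕ | q ≤ z ∧ h i₀ q = h i₀ q₀}) :
    (∑ i : Fin s, zf i) ≤ 2 * z ∧
      ∀ qf : Fin s → ℕ, (∀ i, qf i ≤ z) → (∑ i : Fin s, qf i) ≤ 2 * z →
        (Finset.univ.sup' hsne fun i => h i (zf i)) ≤
          Finset.univ.sup' hsne fun i => h i (qf i) := by
  have hanti : ∀ i, AntitoneOn (h i) (Set.Iic z) := fun i _ _ _ hb hab => hmono i _ _ hab hb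
  have hrow : ∑ i, #(aboveRow z h i₀ q₀ i) = 2 * z := by
    rw [sum_card_aboveRow]
    convert hrank using 3
    exact Iff.rfl
  have hbudget : ∀ i, IsPivotBudget z h i₀ q₀ i (zf i) := fun i => by
    by_cases hi : i = i₀
    · subst hi
      exact isPivotBudget_self (hanti i) hq₀ hzf₀
    · exact isPivotBudget_of_ne hi (hzf₁ i hi) (hzf₂ i hi)
  refine ⟨hrow ▸ sum_le_sum fun i _ => (hbudget i).le_card_aboveRow, fun qf hqf hsum => ?_⟩
  have hpivot : h i₀ q₀ ≤ univ.sup' hsne fun i => h i (qf i) := by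
    by_contra! hlt
    rw [sup'_lt_iff] at hlt
    have := sum_card_aboveRow_lt hanti hq₀ hqf fun i => hlt i (mem_univ i)
    omega
  refine sup'_le _ _ fun j _ => ?_
  rcases (hbudget j).eq_or_apply_le with hj | hj
  · rw [hj]
    exact (hmono j _ _ (hqf j) le_rfl).trans (le_sup' (fun i => h i (qf i)) (mem_univ j))
  · exact hj.trans hpivot

/-- Lemma 4 ('lem-guess') of the paper: the per-site outlier budgets `zf i` derived from
the `(2z+1)`-th lexicographically largest pair `(h i₀ q₀, i₀)` sum to at most `2z` and
minimize `max_i h i (q i)` over all budgets `q : Fin s → {0,…,z}` with `Σ q i ≤ 2z`. -/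
theorem distributed_budget_minimax (s z : ℕ) (hs : 1 ≤ s) (hz : 1 ≤ z)
    (hsne : (Finset.univ : Finset (Fin s)).Nonempty)
    (h : Fin s → ℕ → ℝ)
    (hmono : ∀ i : Fin s, ∀ q q' : ℕ, q ≤ q' → q' ≤ z → h i q' ≤ h i q)
    (i₀ : Fin s) (q₀ : ℕ) (hq₀ : q₀ ≤ z)
    (hrank : (((Finset.univ : Finset (Fin s)) ×ˢ Finset.range (z + 1)).filter
        fun p : Fin s × ℕ =>
          lexLt (h i₀ q₀, i₀) (h p.1 p.2, p.1) ∨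
            (p.1 = i₀ ∧ h p.1 p.2 = h i₀ q₀ ∧ p.2 < q₀)).card = 2 * z)
    (zf : Fin s → ℕ)
    (hzf₁ : ∀ i : Fin s, i ≠ i₀ →
      (∃ q ≤ z, lexLt (h i q, i) (h i₀ q₀, i₀)) →
        zf i = sInf {q : ℕ | q ≤ z ∧ lexLt (h i q, i) (h i₀ q₀, i₀)})
    (hzf₂ : ∀ i : Fin s, i ≠ i₀ →
      (¬ ∃ q ≤ z, lexLt (h i q, i) (h i₀ q₀, i₀)) → zf i = z)
    (hzf₀ : zf i₀ = sInf {q : ℕ | q ≤ z ∧ h i₀ q = h i₀ q₀}) :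
    (∑ i : Fin s, zf i) ≤ 2 * z ∧
      ∀ qf : Fin s → ℕ, (∀ i, qf i ≤ z) → (∑ i : Fin s, qf i) ≤ 2 * z →
        (Finset.univ.sup' hsne fun i => h i (zf i)) ≤
          Finset.univ.sup' hsne fun i => h i (qf i) :=
  distributed_budget_minimax_general s z hsne h hmono i₀ q₀ hq₀ hrank zf hzf₁ hzf₂ hzf₀
end
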